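/- If {F^k} is the pullback attractor of a non-autonomous iterated function system of similarities satisfying the generalised Moran open-set condition, if σ_i = c_k for all i ∈ I_k and all k ∈ ℕ, and if inf{σ_i : i ∈ ℕ} = σ* > 0, then each set F^k is equi-homogeneous. -/

import Mathlib

open Set Metric Filter Bornology MeasureTheory
open scoped ENNReal NNReal

/-- A non-autonomous iterated function system: contractions `f i` with ratios
`σ i ∈ (0,1)` and finite nonempty index sets `I k ⊆ ℕ` for `k ≥ 1`. -/
structure NAIFS (E : Type*) [MetricSpace E] where
  f : ℕ → E → E
  σ : ℕ → ℝ
  σ_pos : ∀ i, 0 < σ i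
  σ_lt_one : ∀ i, σ i < 1
  contract : ∀ i x y, dist (f i x) (f i y) ≤ σ i * dist x y
  I : ℕ → Finset ℕ
  I_nonempty : ∀ k, 1 ≤ k → (I k).Nonempty

variable {E : Type*} [MetricSpace E]

/-- `S^k(B) = ⋃_{i ∈ I_{k+1}} f_i(B)`. -/
def Sstep (sys : NAIFS E) (k : ℕ) (B : Set E) : Set E :=
  ⋃ i ∈ sys.I (k + 1), sys.f i '' B

/-- `SiterN sys k n B = S^{k, k+n}(B) = S^k ∘ ⋯ ∘ S^{k+n-1} (B)`. -/
def SiterN (sys : NAIFS E) : ℕ → ℕ → Set E → Set E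
  | _, 0, B => B
  | k, n + 1, B => Sstep sys k (SiterN sys (k + 1) n B)

/-- Hausdorff semi-distance `ρ_H(A,B) = sup_{x ∈ A} inf_{y ∈ B} d(x,y)`. -/
noncomputable def semidist (A B : Set E) : ℝ≥0∞ :=
  ⨆ x ∈ A, EMetric.infEdist x B

/-- `{F^k}` is a pullback attractor: each `F^k` compact, uniformly bounded,
invariant `F^k = S^k(F^{k+1})`, and `ρ_H(S^{k,l}(B), F^k) → 0` as `l → ∞`
for every bounded `B`. -/
def IsPullbackAttractor (sys : NAIFS E) (F : ℕ → Set E) : Prop :=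
  (∀ k, IsCompact (F k)) ∧
  IsBounded (⋃ k, F k) ∧
  (∀ k, F k = Sstep sys k (F (k + 1))) ∧
  (∀ B : Set E, IsBounded B → ∀ k,
    Tendsto (fun l => semidist (SiterN sys k (l - k) B) (F k)) atTop (nhds 0))

/-- The generalised Moran open-set condition: uniformly bounded nonempty open
sets `U^k` with `S^k(U^{k+1}) ⊆ U^k`, `f_i(U^k) ∩ f_j(U^k) = ∅` for distinct
`i, j ∈ I_k`, and `λ(U^k) ≥ ε₀ > 0`. -/
def GenMoranOSC {d : ℕ} (sys : NAIFS (EuclideanSpace ℝ (Fin d)))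
    (U : ℕ → Set (EuclideanSpace ℝ (Fin d))) (ε₀ : ℝ) : Prop :=
  (∀ k, (U k).Nonempty) ∧
  (∀ k, IsOpen (U k)) ∧
  IsBounded (⋃ k, U k) ∧
  (∀ k, Sstep sys k (U (k + 1)) ⊆ U k) ∧
  (∀ k, 1 ≤ k → ∀ i ∈ sys.I k, ∀ j ∈ sys.I k, i ≠ j →
    sys.f i '' U k ∩ sys.f j '' U k = ∅) ∧
  0 < ε₀ ∧
  (∀ k, ENNReal.ofReal ε₀ ≤ volume (U k))

/-- `coverNumber F δ` : the minimum number of closed `δ`-balls with centres in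
`F` needed to cover `F` (`∞` if there is no finite such cover). -/
noncomputable def coverNumber {X : Type*} [MetricSpace X] (F : Set X) (δ : ℝ) : ℝ≥0∞ :=
  ⨅ (t : Finset X) (_ : (t : Set X) ⊆ F) (_ : F ⊆ ⋃ x ∈ t, closedBall x δ),
    (t.card : ℝ≥0∞)

/-- `F` is equi-homogeneous: for every `δ₀ > 0` there are `M ≥ 1` and
`c₁, c₂ > 0` with
`sup_{x∈F} N(B_δ(x) ∩ F, ρ) ≤ M inf_{x∈F} N(B_{c₁δ}(x) ∩ F, c₂ρ)`
for all `0 < ρ < δ ≤ δ₀`. -/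
def EquiHomogeneous {X : Type*} [MetricSpace X] (F : Set X) : Prop :=
  ∀ δ₀ : ℝ, 0 < δ₀ → ∃ M c₁ c₂ : ℝ, 1 ≤ M ∧ 0 < c₁ ∧ 0 < c₂ ∧
    ∀ δ ρ : ℝ, 0 < ρ → ρ < δ → δ ≤ δ₀ →
      (⨆ x ∈ F, coverNumber (closedBall x δ ∩ F) ρ) ≤
        ENNReal.ofReal M * (⨅ x ∈ F, coverNumber (closedBall x (c₁ * δ) ∩ F) (c₂ * ρ))

/-!
Fix `k` and a scale `δ ≤ δ₀`. As all maps used at step `j` have the same ratio `c_j`, every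
level-`n` word map `f_w = f_{i₁} ∘ ⋯ ∘ f_{iₙ}` is a similarity of ratio `r_n = c_{k+1} ⋯ c_{k+n}`,
and `F^k = ⋃_w f_w(F^{k+n})`. Since `r_{n+1} ≥ σ* r_n` and `r_n → 0`, there is a level `n` with
`β δ ≤ r_n ≤ δ`, where `β = min(σ*, 1/δ₀)`; at that level each piece `f_w(F^{k+n})` has diameter
`O(δ)`. With `R` the radius of a ball containing every `F^m` and `U^m`, two estimates then give
equi-homogeneity with `c₁ = 2R + 1` and `c₂ = 1/4`:

* a ball `B_δ(x)` meets boundedly many pieces, because the corresponding disjoint open sets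
  `f_w(U^{k+n})`, of volume at least `(βδ)^d ε₀`, all lie in a ball of radius `(2R + 1)δ`;
* each piece is a similar copy of `F^{k+n}`, so
  `N(B_δ(x) ∩ F^k, ρ) ≤ #pieces · N(F^{k+n}, ρ/2r_n)`, while every ball `B_{c₁δ}(y)` centred in
  `F^k` contains a whole piece, whence `N(F^{k+n}, ρ/2r_n) ≤ N(B_{c₁δ}(y) ∩ F^k, ρ/4)`.

The attractor property forces `r_n → 0`: otherwise the images `f_w(z)` of a point `z` far from
all `F^m` would stay at distance at least `1` from `F^k`.
-/

lemma Metric.coveringNumber_biUnion_le {Y ι : Type*} [PseudoEMetricSpace Y] (s : Finset ι)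
    (A : ι → Set Y) (ε : ℝ≥0) :
    coveringNumber ε (⋃ i ∈ s, A i) ≤ ∑ i ∈ s, coveringNumber ε (A i) := by
  by_cases htop : ∃ i ∈ s, coveringNumber ε (A i) = ⊤
  · simp [ENat.sum_eq_top.2 htop]
  push Not at htop
  have hcov : IsCover ε (⋃ i ∈ s, A i) (⋃ i ∈ s, minimalCover ε (A i)) := by
    intro x hx
    obtain ⟨i, hi, hxi⟩ := mem_iUnion₂.1 hx
    obtain ⟨y, hy, hxy⟩ := isCover_minimalCover (htop i hi) hxi
    exact ⟨y, mem_iUnion₂.2 ⟨i, hi, hy⟩, hxy⟩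
  calc coveringNumber ε (⋃ i ∈ s, A i)
      ≤ (⋃ i ∈ s, minimalCover ε (A i)).encard :=
        hcov.coveringNumber_le_encard (iUnion₂_mono fun _ _ => minimalCover_subset)
    _ ≤ ∑ i ∈ s, (minimalCover ε (A i)).encard := s.set_encard_biUnion_le _
    _ = ∑ i ∈ s, coveringNumber ε (A i) :=
        Finset.sum_congr rfl fun i hi => encard_minimalCover (htop i hi)

section CoverNumber

variable {X : Type*} [MetricSpace X]

lemma coverNumber_eq_coveringNumber (A : Set X) {ρ : ℝ} (hρ : 0 ≤ ρ) :
    coverNumber A ρ = coveringNumber ⟨ρ, hρ⟩ A := by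
  refine le_antisymm ?_ (le_iInf₂ fun t ht => le_iInf fun hcov => ?_)
  · by_cases htop : coveringNumber ⟨ρ, hρ⟩ A = ⊤
    · simp [htop]
    obtain ⟨C, hCA, hCfin, hCcov, hCcard⟩ := exists_set_encard_eq_coveringNumber htop
    have hCcov' : A ⊆ ⋃ x ∈ C, closedBall x ρ := isCover_iff_subset_iUnion_closedBall.1 hCcov
    rw [← hCcard, hCfin.encard_eq_coe_toFinset_card]
    exact iInf₂_le_of_le hCfin.toFinset (by simpa using hCA) <|
      iInf_le_of_le (by simpa using hCcov') le_rfl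
  · have hcov' : IsCover ⟨ρ, hρ⟩ A t := isCover_iff_subset_iUnion_closedBall.2 hcov
    have := hcov'.coveringNumber_le_encard ht
    rw [Set.encard_coe_eq_coe_finsetCard] at this
    exact_mod_cast this

lemma coverNumber_le_of_subset {A B : Set X} (hAB : A ⊆ B) {ρ : ℝ} (hρ : 0 ≤ ρ) :
    coverNumber A ρ ≤ coverNumber B (ρ / 2) := by
  rw [coverNumber_eq_coveringNumber A hρ, coverNumber_eq_coveringNumber B (by positivity)]
  exact_mod_cast coveringNumber_subset_le hAB

lemma coverNumber_biUnion_le {ι : Type*} (s : Finset ι) (A : ι → Set X) {ρ : ℝ} (hρ : 0 ≤ ρ) :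
    coverNumber (⋃ i ∈ s, A i) ρ ≤ ∑ i ∈ s, coverNumber (A i) ρ := by
  simp only [coverNumber_eq_coveringNumber _ hρ, ← ENat.toENNRealRingHom_apply, ← map_sum]
  exact ENat.toENNReal_le.2 (Metric.coveringNumber_biUnion_le s A ⟨ρ, hρ⟩)

lemma injective_of_dist_eq_mul {g : X → X} {r : ℝ} (hr : 0 < r)
    (hg : ∀ x y, dist (g x) (g y) = r * dist x y) : Function.Injective g := fun x y hxy => by
  simpa [hr.ne'] using (hg x y).symm.trans (dist_eq_zero.2 hxy)

lemma coverNumber_image_of_dist_eq_mul {g : X → X} {r : ℝ} (hr : 0 < r)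
    (hg : ∀ x y, dist (g x) (g y) = r * dist x y) (A : Set X) (ρ : ℝ) :
    coverNumber (g '' A) (r * ρ) = coverNumber A ρ := by
  classical
  have hinj := injective_of_dist_eq_mul hr hg
  refine le_antisymm (le_iInf₂ fun t htA => le_iInf fun hcov => ?_)
    (le_iInf₂ fun t htA => le_iInf fun hcov => ?_)
  · refine iInf₂_le_of_le (t.image g) (by simpa using image_mono htA) <|
      iInf_le_of_le ?_ (by exact_mod_cast t.card_image_le)
    rintro _ ⟨a, ha, rfl⟩
    obtain ⟨x, hx, hax⟩ := mem_iUnion₂.1 (hcov ha)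
    refine mem_iUnion₂.2 ⟨g x, t.mem_image_of_mem g hx, ?_⟩
    rw [mem_closedBall, hg]
    exact mul_le_mul_of_nonneg_left hax hr.le
  · let t' := t.preimage g hinj.injOn
    have ht'A : (t' : Set X) ⊆ A := fun b hb => by
      obtain ⟨a, ha, hab⟩ := htA (Finset.mem_preimage.1 hb)
      exact hinj hab ▸ ha
    refine iInf₂_le_of_le t' ht'A <| iInf_le_of_le ?_ ?_
    · intro a ha
      obtain ⟨x, hx, hax⟩ := mem_iUnion₂.1 (hcov (mem_image_of_mem g ha))
      obtain ⟨b, -, rfl⟩ := htA hx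
      refine mem_iUnion₂.2 ⟨b, Finset.mem_preimage.2 hx, ?_⟩
      rw [mem_closedBall, hg] at hax
      exact le_of_mul_le_mul_left hax hr
    · exact_mod_cast Finset.card_le_card_of_injOn g (fun b hb => Finset.mem_preimage.1 hb)
        hinj.injOn

lemma Set.Subsingleton.equiHomogeneous {F : Set X} (hF : F.Subsingleton) :
    EquiHomogeneous F := by
  intro δ₀ _
  refine ⟨1, 1, 1, le_rfl, one_pos, one_pos, fun δ ρ hρ hρδ _ => ?_⟩
  rw [ENNReal.ofReal_one, one_mul, one_mul, one_mul]
  refine iSup₂_le fun x _ => le_iInf₂ fun y hy => ?_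
  rw [coverNumber_eq_coveringNumber _ hρ.le, coverNumber_eq_coveringNumber _ hρ.le]
  have hsub := hF.anti (inter_subset_right (s := closedBall x δ))
  have hne : (closedBall y δ ∩ F).Nonempty :=
    ⟨y, mem_closedBall_self (hρ.trans hρδ).le, hy⟩
  have hle : coveringNumber ⟨ρ, hρ.le⟩ (closedBall x δ ∩ F) ≤ 1 :=
    coveringNumber_le_one_of_ediam_le (by rw [ediam_eq_zero_iff.2 hsub]; exact zero_le)
  have hge : 1 ≤ coveringNumber ⟨ρ, hρ.le⟩ (closedBall y δ ∩ F) :=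
    Order.one_le_iff_pos.2 (coveringNumber_pos_iff.2 hne)
  exact ENat.toENNReal_le.2 (hle.trans hge)

end CoverNumber

lemma card_mul_le_measure_of_pairwiseDisjoint {α ι : Type*} [MeasurableSpace α] {μ : Measure α}
    {s : Finset ι} {A : ι → Set α} {B : Set α} {a : ℝ≥0∞}
    (hdisj : (s : Set ι).PairwiseDisjoint A) (hmeas : ∀ i ∈ s, MeasurableSet (A i))
    (ha : ∀ i ∈ s, a ≤ μ (A i)) (hB : ∀ i ∈ s, A i ⊆ B) : s.card * a ≤ μ B :=
  calc s.card * a = ∑ _i ∈ s, a := by rw [Finset.sum_const, nsmul_eq_mul]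
    _ ≤ ∑ i ∈ s, μ (A i) := Finset.sum_le_sum ha
    _ = μ (⋃ i ∈ s, A i) := (measure_biUnion_finset hdisj hmeas).symm
    _ ≤ μ B := measure_mono (iUnion₂_subset hB)

section InnerProductSpace

open scoped Pointwise

variable {V : Type*} [NormedAddCommGroup V] [InnerProductSpace ℝ V] [FiniteDimensional ℝ V]
  {g : V → V} {r : ℝ}

lemma exists_linearIsometryEquiv_of_dist_eq_mul (hr : 0 < r)
    (hg : ∀ x y, dist (g x) (g y) = r * dist x y) :
    ∃ (a : V) (L : V ≃ₗᵢ[ℝ] V), ∀ x, g x = a + r • L x := by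
  have hi : Isometry fun x => r⁻¹ • g x := Isometry.of_dist_eq fun x y => by
    rw [dist_smul₀, hg, Real.norm_eq_abs, abs_inv, abs_of_pos hr, inv_mul_cancel_left₀ hr.ne']
  let A := hi.affineIsometryOfStrictConvexSpace
  refine ⟨g 0, A.linearIsometry.toLinearIsometryEquiv rfl, fun x => ?_⟩
  have hA : r⁻¹ • g x = A.linearIsometry x + r⁻¹ • g 0 := by
    simpa [A] using A.map_vadd 0 x
  calc g x = r • (r⁻¹ • g x) := (smul_inv_smul₀ hr.ne' _).symm
    _ = g 0 + r • A.linearIsometry x := by rw [hA, smul_add, smul_inv_smul₀ hr.ne', add_comm]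

lemma isOpenMap_of_dist_eq_mul (hr : 0 < r) (hg : ∀ x y, dist (g x) (g y) = r * dist x y) :
    IsOpenMap g := by
  obtain ⟨a, L, hL⟩ := exists_linearIsometryEquiv_of_dist_eq_mul hr hg
  rw [show g = (a + ·) ∘ (r • ·) ∘ L from funext hL]
  exact (isOpenMap_add_left _).comp ((isOpenMap_smul₀ hr.ne').comp L.toHomeomorph.isOpenMap)

variable [MeasurableSpace V] [BorelSpace V]

lemma volume_image_of_dist_eq_mul (hr : 0 < r) (hg : ∀ x y, dist (g x) (g y) = r * dist x y)
    (s : Set V) : volume (g '' s) = ENNReal.ofReal (r ^ Module.finrank ℝ V) * volume s := by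
  obtain ⟨a, L, hL⟩ := exists_linearIsometryEquiv_of_dist_eq_mul hr hg
  have hgs : g '' s = a +ᵥ r • L '' s := by
    ext y
    simp [mem_vadd_set, mem_smul_set, hL]
  rw [hgs, measure_vadd, Measure.addHaar_smul_of_nonneg _ hr.le, L.image_eq_preimage_symm,
    L.symm.measurePreserving.measure_preimage_emb L.symm.toHomeomorph.measurableEmbedding]

end InnerProductSpace

/-- Abstracts the decomposition `F^k = ⋃_w f_w(F^{k+n})` into level-`n` pieces, with
`U = U^{k+n}` carrying the open-set condition. -/
structure IsSimilarDecomposition {X ι : Type*} [MetricSpace X] (W : Finset ι) (g : ι → X → X)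
    (r : ℝ) (F' U F : Set X) : Prop where
  ratio_pos : 0 < r
  dist_eq : ∀ w ∈ W, ∀ x y, dist (g w x) (g w y) = r * dist x y
  eq_biUnion : F = ⋃ w ∈ W, g w '' F'
  pairwiseDisjoint : (W : Set ι).PairwiseDisjoint fun w => g w '' U

namespace IsSimilarDecomposition

section Metric

variable {X ι : Type*} [MetricSpace X] {W : Finset ι} {g : ι → X → X} {r : ℝ} {F' U F : Set X}

lemma dist_le (h : IsSimilarDecomposition W g r F' U F) {w : ι} (hw : w ∈ W) {y₀ a b : X}
    {R : ℝ} (ha : a ∈ closedBall y₀ R) (hb : b ∈ closedBall y₀ R) :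
    dist (g w a) (g w b) ≤ r * (2 * R) := by
  rw [h.dist_eq w hw]
  refine mul_le_mul_of_nonneg_left ?_ h.ratio_pos.le
  linarith [dist_triangle_right a b y₀, mem_closedBall.1 ha, mem_closedBall.1 hb]

lemma coverNumber_le_card_mul (h : IsSimilarDecomposition W g r F' U F) {P : Finset ι}
    (hP : P ⊆ W) {A : Set X} (hA : A ⊆ ⋃ w ∈ P, g w '' F') {ρ : ℝ} (hρ : 0 ≤ ρ) :
    coverNumber A ρ ≤ P.card * coverNumber F' (ρ / 2 / r) :=
  calc coverNumber A ρ
      ≤ coverNumber (⋃ w ∈ P, g w '' F') (ρ / 2) := coverNumber_le_of_subset hA hρ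
    _ ≤ ∑ w ∈ P, coverNumber (g w '' F') (ρ / 2) := coverNumber_biUnion_le P _ (by positivity)
    _ = ∑ _w ∈ P, coverNumber F' (ρ / 2 / r) := Finset.sum_congr rfl fun w hw => by
        rw [← coverNumber_image_of_dist_eq_mul h.ratio_pos (h.dist_eq w (hP hw)) F' (ρ / 2 / r),
          mul_div_cancel₀ _ h.ratio_pos.ne']
    _ = P.card * coverNumber F' (ρ / 2 / r) := by rw [Finset.sum_const, nsmul_eq_mul]

lemma coverNumber_le_coverNumber_inter_closedBall (h : IsSimilarDecomposition W g r F' U F)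
    {y₀ : X} {R : ℝ} (hF' : F' ⊆ closedBall y₀ R) {y : X} (hy : y ∈ F) {D : ℝ}
    (hD : r * (2 * R) ≤ D) {ρ : ℝ} (hρ : 0 ≤ ρ) :
    coverNumber F' (ρ / 2 / r) ≤ coverNumber (closedBall y D ∩ F) (ρ / 2 / 2) := by
  obtain ⟨w, hw, b, hb, rfl⟩ := mem_iUnion₂.1 (h.eq_biUnion ▸ hy)
  rw [← coverNumber_image_of_dist_eq_mul h.ratio_pos (h.dist_eq w hw),
    mul_div_cancel₀ _ h.ratio_pos.ne']
  refine coverNumber_le_of_subset ?_ (by positivity)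
  rintro _ ⟨a, ha, rfl⟩
  exact ⟨(h.dist_le hw (hF' ha) (hF' hb)).trans hD,
    h.eq_biUnion ▸ mem_iUnion₂.2 ⟨w, hw, a, ha, rfl⟩⟩

end Metric

variable {V ι : Type*} [NormedAddCommGroup V] [InnerProductSpace ℝ V] [FiniteDimensional ℝ V]
  [MeasurableSpace V] [BorelSpace V] {W : Finset ι} {g : ι → V → V} {r : ℝ} {F' U F : Set V}
  {y₀ : V} {R : ℝ}

lemma card_mul_volume_le_volume_closedBall (h : IsSimilarDecomposition W g r F' U F)
    (hF' : F' ⊆ closedBall y₀ R) (hU : U ⊆ closedBall y₀ R) (hUo : IsOpen U) {P : Finset ι}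
    (hP : P ⊆ W) {x : V} {δ : ℝ} (hPx : ∀ w ∈ P, (g w '' F' ∩ closedBall x δ).Nonempty) :
    P.card * (ENNReal.ofReal (r ^ Module.finrank ℝ V) * volume U) ≤
      volume (closedBall x (δ + r * (2 * R))) := by
  refine card_mul_le_measure_of_pairwiseDisjoint (h.pairwiseDisjoint.subset hP)
    (fun w hw => (isOpenMap_of_dist_eq_mul h.ratio_pos (h.dist_eq w (hP hw)) _ hUo).measurableSet)
    (fun w hw => (volume_image_of_dist_eq_mul h.ratio_pos (h.dist_eq w (hP hw)) U).ge) ?_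
  rintro w hw _ ⟨u, hu, rfl⟩
  obtain ⟨_, ⟨q, hq, rfl⟩, hqx⟩ := hPx w hw
  rw [mem_closedBall] at hqx ⊢
  linarith [dist_triangle (g w u) (g w q) x, h.dist_le (hP hw) (hU hu) (hF' hq)]

lemma card_le_of_meets_closedBall (h : IsSimilarDecomposition W g r F' U F)
    (hF' : F' ⊆ closedBall y₀ R) (hU : U ⊆ closedBall y₀ R) (hUo : IsOpen U) {ε₀ : ℝ}
    (hε₀ : 0 < ε₀) (hUvol : ENNReal.ofReal ε₀ ≤ volume U) (hR : 0 ≤ R) {β δ : ℝ} (hβ : 0 < β)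
    (hβr : β * δ ≤ r) (hrδ : r ≤ δ) {P : Finset ι} (hP : P ⊆ W) {x : V}
    (hPx : ∀ w ∈ P, (g w '' F' ∩ closedBall x δ).Nonempty) :
    (P.card : ℝ≥0∞) ≤
      ENNReal.ofReal ((volume (closedBall (0 : V) ((2 * R + 1) / β))).toReal / ε₀) := by
  set vol := volume (closedBall (0 : V) ((2 * R + 1) / β))
  set c := ENNReal.ofReal ((β * δ) ^ Module.finrank ℝ V)
  have hδ : 0 < δ := h.ratio_pos.trans_le hrδ
  have hc : c ≠ 0 := by positivity
  have key : P.card * (c * ENNReal.ofReal ε₀) ≤ c * vol :=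
    calc P.card * (c * ENNReal.ofReal ε₀)
        ≤ P.card * (ENNReal.ofReal (r ^ Module.finrank ℝ V) * volume U) := by
          gcongr
          exact ENNReal.ofReal_le_ofReal (pow_le_pow_left₀ (by positivity) hβr _)
      _ ≤ volume (closedBall x (δ + r * (2 * R))) :=
          h.card_mul_volume_le_volume_closedBall hF' hU hUo hP hPx
      _ ≤ volume (closedBall x ((β * δ) * ((2 * R + 1) / β))) := by
          refine measure_mono (closedBall_subset_closedBall ?_)
          rw [mul_div_assoc', mul_assoc, mul_div_cancel_left₀ _ hβ.ne']
          nlinarith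
      _ = c * vol := Measure.addHaar_closedBall_mul _ _ (by positivity) (by positivity)
  rw [mul_left_comm, ENNReal.mul_le_mul_iff_right hc ENNReal.ofReal_ne_top,
    ← ENNReal.le_div_iff_mul_le (Or.inl (by simpa using hε₀)) (Or.inl ENNReal.ofReal_ne_top)] at key
  rwa [ENNReal.ofReal_div_of_pos hε₀, ENNReal.ofReal_toReal measure_closedBall_lt_top.ne]

theorem iSup_coverNumber_le_mul_iInf (h : IsSimilarDecomposition W g r F' U F)
    (hF' : F' ⊆ closedBall y₀ R) (hU : U ⊆ closedBall y₀ R) (hUo : IsOpen U) {ε₀ : ℝ}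
    (hε₀ : 0 < ε₀) (hUvol : ENNReal.ofReal ε₀ ≤ volume U) (hR : 0 ≤ R) {β δ ρ : ℝ} (hβ : 0 < β)
    (hβr : β * δ ≤ r) (hrδ : r ≤ δ) (hρ : 0 ≤ ρ) :
    (⨆ x ∈ F, coverNumber (closedBall x δ ∩ F) ρ) ≤
      ENNReal.ofReal ((volume (closedBall (0 : V) ((2 * R + 1) / β))).toReal / ε₀) *
        ⨅ y ∈ F, coverNumber (closedBall y ((2 * R + 1) * δ) ∩ F) (1 / 4 * ρ) := by
  classical
  have hD : r * (2 * R) ≤ (2 * R + 1) * δ := by nlinarith [h.ratio_pos]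
  refine iSup₂_le fun x _ => ?_
  set P := W.filter fun w => (g w '' F' ∩ closedBall x δ).Nonempty
  have hcover : closedBall x δ ∩ F ⊆ ⋃ w ∈ P, g w '' F' := by
    rintro a ⟨hax, haF⟩
    obtain ⟨w, hw, haw⟩ := mem_iUnion₂.1 (h.eq_biUnion ▸ haF)
    exact mem_iUnion₂.2 ⟨w, Finset.mem_filter.2 ⟨hw, a, haw, hax⟩, haw⟩
  refine (h.coverNumber_le_card_mul (Finset.filter_subset _ _) hcover hρ).trans ?_
  gcongr
  · exact h.card_le_of_meets_closedBall hF' hU hUo hε₀ hUvol hR hβ hβr hrδ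
      (Finset.filter_subset _ _) fun w hw => (Finset.mem_filter.1 hw).2
  · refine le_iInf₂ fun y hy => ?_
    rw [show 1 / 4 * ρ = ρ / 2 / 2 by ring]
    exact h.coverNumber_le_coverNumber_inter_closedBall hF' hy hD hρ

end IsSimilarDecomposition

lemma exists_min_mul_le_and_le {r : ℕ → ℝ} {σ δ δ₀ : ℝ} (hr₀ : r 0 = 1) (hσ : 0 ≤ σ)
    (hr : ∀ n, σ * r n ≤ r (n + 1)) (hδ : 0 < δ) (hδδ₀ : δ ≤ δ₀) (hex : ∃ n, r n ≤ δ) :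
    ∃ n, min σ δ₀⁻¹ * δ ≤ r n ∧ r n ≤ δ := by
  classical
  refine ⟨Nat.find hex, ?_, Nat.find_spec hex⟩
  rcases hfind : Nat.find hex with _ | m
  · calc min σ δ₀⁻¹ * δ ≤ δ₀⁻¹ * δ := by gcongr; exact min_le_right _ _
      _ ≤ r 0 := by rw [hr₀]; exact inv_mul_le_one_of_le₀ hδδ₀ (hδ.le.trans hδδ₀)
  · have hm : δ < r m := not_le.1 (Nat.find_min hex (hfind ▸ Nat.lt_succ_self m))
    calc min σ δ₀⁻¹ * δ ≤ σ * r m := by gcongr; exact min_le_left _ _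
      _ ≤ r (m + 1) := hr m

def wordRatio (c : ℕ → ℝ) (k n : ℕ) : ℝ := ∏ j ∈ Finset.range n, c (k + 1 + j)

namespace NAIFS

variable (sys : NAIFS E)

/-- `words k n` consists of the words `i₁ ⋯ iₙ` with `iⱼ ∈ I_{k+j}`, so that
`wordMap w = f_{i₁} ∘ ⋯ ∘ f_{iₙ}` maps `F^{k+n}` into `F^k`. -/
def words : ℕ → ℕ → Finset (List ℕ)
  | _, 0 => {[]}
  | k, n + 1 => (sys.I (k + 1)).biUnion fun i => (words (k + 1) n).image (i :: ·)

def wordMap : List ℕ → E → E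
  | [] => id
  | i :: w => sys.f i ∘ wordMap w

variable {sys}

@[simp] lemma mem_words_zero {k : ℕ} {w : List ℕ} : w ∈ sys.words k 0 ↔ w = [] := by
  simp [words]

lemma mem_words_succ {k n : ℕ} {w : List ℕ} :
    w ∈ sys.words k (n + 1) ↔ ∃ i ∈ sys.I (k + 1), ∃ w' ∈ sys.words (k + 1) n, w = i :: w' := by
  simp [words, eq_comm]

lemma words_nonempty (k n : ℕ) : (sys.words k n).Nonempty := by
  induction n generalizing k with
  | zero => exact ⟨[], mem_words_zero.2 rfl⟩
  | succ n ih =>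
    obtain ⟨i, hi⟩ := sys.I_nonempty (k + 1) (Nat.le_add_left 1 k)
    obtain ⟨w, hw⟩ := ih (k + 1)
    exact ⟨i :: w, mem_words_succ.2 ⟨i, hi, w, hw, rfl⟩⟩

lemma wordMap_mem_SiterN {k n : ℕ} {w : List ℕ} (hw : w ∈ sys.words k n) {B : Set E} {x : E}
    (hx : x ∈ B) : sys.wordMap w x ∈ SiterN sys k n B := by
  induction n generalizing k w with
  | zero => rw [mem_words_zero.1 hw]; exact hx
  | succ n ih =>
    obtain ⟨i, hi, w', hw', rfl⟩ := mem_words_succ.1 hw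
    exact mem_iUnion₂.2 ⟨i, hi, mem_image_of_mem _ (ih hw')⟩

lemma SiterN_nonempty {B : Set E} (hB : B.Nonempty) (k n : ℕ) :
    (SiterN sys k n B).Nonempty := by
  obtain ⟨w, hw⟩ := sys.words_nonempty k n
  exact ⟨_, wordMap_mem_SiterN hw hB.some_mem⟩

lemma eq_biUnion_wordMap_image {F : ℕ → Set E} (hinv : ∀ k, F k = Sstep sys k (F (k + 1)))
    (k n : ℕ) : F k = ⋃ w ∈ sys.words k n, sys.wordMap w '' F (k + n) := by
  induction n generalizing k with
  | zero => simp [wordMap]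
  | succ n ih =>
    rw [hinv k, Sstep, ih (k + 1), show k + 1 + n = k + (n + 1) by omega]
    ext z
    simp only [mem_iUnion, mem_image, exists_prop, mem_words_succ]
    constructor
    · rintro ⟨i, hi, _, ⟨w', hw', a, ha, rfl⟩, rfl⟩
      exact ⟨i :: w', ⟨i, hi, w', hw', rfl⟩, a, ha, rfl⟩
    · rintro ⟨_, ⟨i, hi, w', hw', rfl⟩, a, ha, rfl⟩
      exact ⟨i, hi, sys.wordMap w' a, ⟨w', hw', a, ha, rfl⟩, rfl⟩

lemma wordMap_image_subset {U : ℕ → Set E} (hnest : ∀ k, Sstep sys k (U (k + 1)) ⊆ U k)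
    {k n : ℕ} {w : List ℕ} (hw : w ∈ sys.words k n) : sys.wordMap w '' U (k + n) ⊆ U k := by
  induction n generalizing k w with
  | zero => simp [mem_words_zero.1 hw, wordMap]
  | succ n ih =>
    obtain ⟨i, hi, w', hw', rfl⟩ := mem_words_succ.1 hw
    rintro _ ⟨a, ha, rfl⟩
    have hw'a : sys.wordMap w' a ∈ U (k + 1) :=
      ih hw' ⟨a, by rwa [show k + 1 + n = k + (n + 1) by omega], rfl⟩
    exact hnest k (mem_iUnion₂.2 ⟨i, hi, mem_image_of_mem _ hw'a⟩)

lemma wordRatio_pos {c : ℕ → ℝ} (hc : ∀ k, 1 ≤ k → ∀ i ∈ sys.I k, sys.σ i = c k) (k n : ℕ) :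
    0 < wordRatio c k n := by
  refine Finset.prod_pos fun j _ => ?_
  obtain ⟨i, hi⟩ := sys.I_nonempty (k + 1 + j) (by omega)
  exact hc _ (by omega) i hi ▸ sys.σ_pos i

lemma mul_wordRatio_le_wordRatio_succ {c : ℕ → ℝ}
    (hc : ∀ k, 1 ≤ k → ∀ i ∈ sys.I k, sys.σ i = c k) {σ : ℝ} (hσ : ∀ i, σ ≤ sys.σ i)
    (k n : ℕ) : σ * wordRatio c k n ≤ wordRatio c k (n + 1) := by
  obtain ⟨i, hi⟩ := sys.I_nonempty (k + 1 + n) (by omega)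
  unfold wordRatio
  rw [Finset.prod_range_succ, mul_comm, ← hc _ (by omega) i hi]
  exact mul_le_mul_of_nonneg_left (hσ i) (sys.wordRatio_pos hc k n).le

lemma dist_wordMap {c : ℕ → ℝ} (hsim : ∀ i x y, dist (sys.f i x) (sys.f i y) = sys.σ i * dist x y)
    (hc : ∀ k, 1 ≤ k → ∀ i ∈ sys.I k, sys.σ i = c k) {k n : ℕ} {w : List ℕ}
    (hw : w ∈ sys.words k n) (x y : E) :
    dist (sys.wordMap w x) (sys.wordMap w y) = wordRatio c k n * dist x y := by
  induction n generalizing k w with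
  | zero => simp [mem_words_zero.1 hw, wordMap, wordRatio]
  | succ n ih =>
    obtain ⟨i, hi, w', hw', rfl⟩ := mem_words_succ.1 hw
    rw [wordMap, Function.comp_apply, Function.comp_apply, hsim, ih hw',
      hc (k + 1) (by omega) i hi]
    unfold wordRatio
    rw [Finset.prod_range_succ', add_zero,
      Finset.prod_congr rfl fun j _ => congrArg c (show k + 1 + (j + 1) = k + 1 + 1 + j by omega)]
    ring

lemma pairwiseDisjoint_wordMap_image {U : ℕ → Set E}
    (hsim : ∀ i x y, dist (sys.f i x) (sys.f i y) = sys.σ i * dist x y)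
    (hnest : ∀ k, Sstep sys k (U (k + 1)) ⊆ U k)
    (hdisj : ∀ k, 1 ≤ k → ∀ i ∈ sys.I k, ∀ j ∈ sys.I k, i ≠ j →
      sys.f i '' U k ∩ sys.f j '' U k = ∅) (k n : ℕ) :
    (sys.words k n : Set (List ℕ)).PairwiseDisjoint fun w => sys.wordMap w '' U (k + n) := by
  induction n generalizing k with
  | zero => simp [mem_words_zero, Set.PairwiseDisjoint, Set.Pairwise]
  | succ n ih =>
    rintro _ hw₀ _ hv₀ hne
    obtain ⟨i, hi, w, hw, rfl⟩ := mem_words_succ.1 hw₀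
    obtain ⟨j, hj, v, hv, rfl⟩ := mem_words_succ.1 hv₀
    have hk : k + 1 + n = k + (n + 1) := by omega
    simp only [Function.onFun, wordMap, image_comp]
    by_cases hij : i = j
    · subst hij
      rw [← hk]
      exact (disjoint_image_iff (injective_of_dist_eq_mul (sys.σ_pos i) (hsim i))).2
        (ih (k + 1) hw hv fun h => hne (h ▸ rfl))
    · refine disjoint_iff_inter_eq_empty.2 (subset_empty_iff.1 ?_)
      rw [← hdisj (k + 1) (by omega) i hi j hj hij, ← hk]
      exact inter_subset_inter (image_mono (wordMap_image_subset hnest hw))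
        (image_mono (wordMap_image_subset hnest hv))

lemma isSimilarDecomposition {c : ℕ → ℝ} {F U : ℕ → Set E}
    (hsim : ∀ i x y, dist (sys.f i x) (sys.f i y) = sys.σ i * dist x y)
    (hc : ∀ k, 1 ≤ k → ∀ i ∈ sys.I k, sys.σ i = c k)
    (hinv : ∀ k, F k = Sstep sys k (F (k + 1))) (hnest : ∀ k, Sstep sys k (U (k + 1)) ⊆ U k)
    (hdisj : ∀ k, 1 ≤ k → ∀ i ∈ sys.I k, ∀ j ∈ sys.I k, i ≠ j →
      sys.f i '' U k ∩ sys.f j '' U k = ∅) (k n : ℕ) :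
    IsSimilarDecomposition (sys.words k n) sys.wordMap (wordRatio c k n) (F (k + n)) (U (k + n))
      (F k) where
  ratio_pos := sys.wordRatio_pos hc k n
  dist_eq _ hw := sys.dist_wordMap hsim hc hw
  eq_biUnion := sys.eq_biUnion_wordMap_image hinv k n
  pairwiseDisjoint := sys.pairwiseDisjoint_wordMap_image hsim hnest hdisj k n

end NAIFS

namespace IsPullbackAttractor

lemma nonempty [Nonempty E] {sys : NAIFS E} {F : ℕ → Set E} (hF : IsPullbackAttractor sys F)
    (m : ℕ) : (F m).Nonempty := by
  obtain ⟨z⟩ := ‹Nonempty E›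
  by_contra! hFm
  obtain ⟨l, hl⟩ := ((hF.2.2.2 {z} isBounded_singleton m).eventually
    (Iio_mem_nhds zero_lt_one)).exists
  obtain ⟨x, hx⟩ := NAIFS.SiterN_nonempty (sys := sys) (singleton_nonempty z) m (l - m)
  refine hl.not_ge (le_iSup₂_of_le x hx ?_)
  change 1 ≤ Metric.infEDist x (F m)
  rw [hFm, Metric.infEDist_empty]
  exact le_top

lemma exists_wordRatio_le {V : Type*} [NormedAddCommGroup V] [NormedSpace ℝ V] [Nontrivial V]
    {sys : NAIFS V} {F : ℕ → Set V} (hF : IsPullbackAttractor sys F) {c : ℕ → ℝ}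
    (hsim : ∀ i x y, dist (sys.f i x) (sys.f i y) = sys.σ i * dist x y)
    (hc : ∀ k, 1 ≤ k → ∀ i ∈ sys.I k, sys.σ i = c k) (k : ℕ) {ε : ℝ} (hε : 0 < ε) :
    ∃ n, wordRatio c k n ≤ ε := by
  by_contra! hlarge
  obtain ⟨R, hR₀, hR⟩ := hF.2.1.subset_closedBall_lt 0 (0 : V)
  have hFR : ∀ m, F m ⊆ closedBall 0 R := fun m => (subset_iUnion F m).trans hR
  obtain ⟨z, hz⟩ := NormedSpace.exists_lt_norm ℝ V (R + (2 * R + 1) / ε)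
  obtain ⟨l, hl⟩ := ((hF.2.2.2 {z} isBounded_singleton k).eventually
    (Iio_mem_nhds zero_lt_one)).exists
  obtain ⟨w, hw⟩ := sys.words_nonempty k (l - k)
  obtain ⟨p, hp⟩ := hF.nonempty (k + (l - k))
  have hwp : sys.wordMap w p ∈ F k :=
    sys.eq_biUnion_wordMap_image hF.2.2.1 k (l - k) ▸ mem_iUnion₂.2 ⟨w, hw, p, hp, rfl⟩
  have hzp : (2 * R + 1) / ε ≤ dist z p := by
    linarith [norm_le_norm_add_norm_sub' z p, mem_closedBall_zero_iff.1 (hFR _ hp),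
      dist_eq_norm z p]
  have hfar : 2 * R + 1 ≤ dist (sys.wordMap w z) (sys.wordMap w p) := by
    rw [sys.dist_wordMap hsim hc hw]
    calc 2 * R + 1 = ε * ((2 * R + 1) / ε) := by field_simp
      _ ≤ wordRatio c k (l - k) * dist z p :=
        mul_le_mul (hlarge _).le hzp (by positivity) (sys.wordRatio_pos hc k _).le
  refine hl.not_ge (le_iSup₂_of_le _ (NAIFS.wordMap_mem_SiterN hw rfl) ?_)
  change 1 ≤ Metric.infEDist _ (F k)
  refine Metric.le_infEDist.2 fun q hq => ?_
  rw [edist_dist, ENNReal.one_le_ofReal]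
  linarith [dist_triangle (sys.wordMap w z) q (sys.wordMap w p),
    dist_triangle_right q (sys.wordMap w p) 0, mem_closedBall.1 (hFR k hq),
    mem_closedBall.1 (hFR k hwp)]

end IsPullbackAttractor

/-- If the pullback attractor of a non-autonomous IFS of
similarities satisfies the generalised Moran open-set condition, the ratios
coincide within each step (`σ_i = c_k` for `i ∈ I_k`), and
`inf{σ_i} = σ* > 0`, then each `F^k` is equi-homogeneous. -/
theorem attractor_equiHomogeneous_of_equal_ratios_of_inf_pos {d : ℕ}
    (sys : NAIFS (EuclideanSpace ℝ (Fin d)))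
    (hsim : ∀ i x y, dist (sys.f i x) (sys.f i y) = sys.σ i * dist x y)
    (U : ℕ → Set (EuclideanSpace ℝ (Fin d))) (ε₀ : ℝ)
    (hosc : GenMoranOSC sys U ε₀)
    (c : ℕ → ℝ) (hc : ∀ k, 1 ≤ k → ∀ i ∈ sys.I k, sys.σ i = c k)
    (σstar : ℝ) (hσstar : σstar = sInf (Set.range sys.σ)) (hσpos : 0 < σstar)
    (F : ℕ → Set (EuclideanSpace ℝ (Fin d)))
    (hF : IsPullbackAttractor sys F) :
    ∀ k, EquiHomogeneous (F k) := by
  intro k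
  rcases subsingleton_or_nontrivial (EuclideanSpace ℝ (Fin d)) with hE | hE
  · exact subsingleton_of_subsingleton.equiHomogeneous
  obtain ⟨-, hUo, hUbdd, hnest, hdisj, hε₀, hUvol⟩ := hosc
  obtain ⟨R, hR, hball⟩ := (hF.2.1.union hUbdd).subset_closedBall_lt 0 0
  have hσ : ∀ i, σstar ≤ sys.σ i := fun i =>
    hσstar ▸ csInf_le ⟨0, by rintro _ ⟨j, rfl⟩; exact (sys.σ_pos j).le⟩ ⟨i, rfl⟩
  intro δ₀ hδ₀
  refine ⟨max 1 ((volume (closedBall (0 : EuclideanSpace ℝ (Fin d))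
    ((2 * R + 1) / min σstar δ₀⁻¹))).toReal / ε₀), 2 * R + 1, 1 / 4, le_max_left _ _,
    by positivity, by norm_num, fun δ ρ hρ hρδ hδ => ?_⟩
  have hδpos : 0 < δ := hρ.trans hρδ
  obtain ⟨n, hβn, hnδ⟩ := exists_min_mul_le_and_le (by simp [wordRatio]) hσpos.le
    (sys.mul_wordRatio_le_wordRatio_succ hc hσ k) hδpos hδ (hF.exists_wordRatio_le hsim hc k hδpos)
  refine ((sys.isSimilarDecomposition hsim hc hF.2.2.1 hnest hdisj k n).iSup_coverNumber_le_mul_iInf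
    (hball.trans' (subset_union_of_subset_left (subset_iUnion F _) _))
    (hball.trans' (subset_union_of_subset_right (subset_iUnion U _) _)) (hUo _) hε₀ (hUvol _)
    hR.le (lt_min hσpos (inv_pos.2 hδ₀)) hβn hnδ hρ.le).trans ?_
  gcongr
  exact le_max_right _ _
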